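/- arXiv:1606.02815 — 5 statements merged into one kernel-verified Lean document; each statement's English description precedes it below -/
import Mathlib

section
/- If G is a bipartite graph in the class W₂ (well-covered, without isolated vertices, and the removal of any vertex leaves a well-covered graph with the same independence number), then G is a disjoint union of edges (a perfect matching with no other edges). -/
/-! Let `A` and its complement be the sides of the bipartition. With no isolated vertices both are
maximal independent sets, so both have size `α`. For `u ∉ A`, the set `Aᶜ \ {u}` together with the
leaves hanging at `u` is a maximal independent set of `G - u`; as `G - u` is well-covered with
independence number `α`, exactly one leaf hangs at each `u ∉ A`. These leaves are distinct and lie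
in `A`, and there are `|Aᶜ| = |A|` of them, so every vertex of `A` is a leaf. -/

open Set

variable {V : Type*}

/-- `S` is an independent set of `G` contained in the vertex subset `W`
(i.e. an independent set of the induced subgraph `G[W]`). -/
def IsIndepOn (G : SimpleGraph V) (W S : Set V) : Prop :=
  S ⊆ W ∧ ∀ ⦃x⦄, x ∈ S → ∀ ⦃y⦄, y ∈ S → ¬ G.Adj x y

/-- `S` is a maximal independent set of the induced subgraph `G[W]`. -/
def MaxIndepOn (G : SimpleGraph V) (W : Set V) (S : Finset V) : Prop :=
  IsIndepOn G W ↑S ∧ ∀ v ∈ W, v ∉ S → ¬ IsIndepOn G W (insert v ↑S)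

/-- The independence number of the induced subgraph `G[W]`. -/
noncomputable def indepNumOn (G : SimpleGraph V) (W : Set V) : ℕ :=
  sSup {n | ∃ S : Finset V, IsIndepOn G W ↑S ∧ S.card = n}

/-- The induced subgraph `G[W]` is well-covered: every maximal independent set
has cardinality equal to the independence number. -/
def WellCoveredOn (G : SimpleGraph V) (W : Set V) : Prop :=
  ∀ S : Finset V, MaxIndepOn G W S → S.card = indepNumOn G W

/-- The independence number `α(G)`. -/
noncomputable def indepNum (G : SimpleGraph V) : ℕ := indepNumOn G Set.univ

/-- `G` is well-covered. -/
def WellCovered (G : SimpleGraph V) : Prop := WellCoveredOn G Set.univ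

/-- The induced subgraph `G[W]` has no isolated vertices. -/
def NoIsolatedOn (G : SimpleGraph V) (W : Set V) : Prop :=
  ∀ v ∈ W, ∃ u ∈ W, G.Adj v u

/-- The induced subgraph `G[W]` is in the class `W₂`: it has no isolated
vertices, is well-covered, and removing any vertex leaves a well-covered graph
with the same independence number. -/
def W2On (G : SimpleGraph V) (W : Set V) : Prop :=
  NoIsolatedOn G W ∧ WellCoveredOn G W ∧
    ∀ v ∈ W, WellCoveredOn G (W \ {v}) ∧ indepNumOn G (W \ {v}) = indepNumOn G W

/-- `G` is in the class `W₂`. -/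
def W2 (G : SimpleGraph V) : Prop := W2On G Set.univ

/-- The closed neighborhood `N_G[S]` of a set of vertices `S`. -/
def nbhd (G : SimpleGraph V) (S : Set V) : Set V :=
  {v | v ∈ S ∨ ∃ u ∈ S, G.Adj u v}

/-- The vertex set of `G_S = G \ N_G[S]`. -/
def GDel (G : SimpleGraph V) (S : Set V) : Set V := Set.univ \ nbhd G S

/-- The induced subgraph `G[W]` is triangle-free. -/
def TriangleFreeOn (G : SimpleGraph V) (W : Set V) : Prop :=
  ∀ x ∈ W, ∀ y ∈ W, ∀ z ∈ W, ¬ (G.Adj x y ∧ G.Adj y z ∧ G.Adj x z)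

/-- `G` is locally triangle-free: `G_v` is triangle-free for every vertex `v`. -/
def LocallyTriangleFree (G : SimpleGraph V) : Prop :=
  ∀ v : V, TriangleFreeOn G (GDel G {v})

/-- `G` is a join of two proper (nonempty, disjoint) subgraphs. -/
def IsJoin (G : SimpleGraph V) : Prop :=
  ∃ V₁ V₂ : Set V, V₁.Nonempty ∧ V₂.Nonempty ∧ Disjoint V₁ V₂ ∧ V₁ ∪ V₂ = Set.univ ∧
    ∀ x ∈ V₁, ∀ y ∈ V₂, G.Adj x y

namespace SimpleGraph

variable {G : SimpleGraph V} {A : Finset V} {u v : V}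

def IsBipartition (G : SimpleGraph V) (A : Finset V) : Prop :=
  ∀ ⦃x y⦄, G.Adj x y → (x ∈ A ↔ y ∉ A)

def leavesAt [Fintype V] [DecidableEq V] [DecidableRel G.Adj] (u : V) : Finset V :=
  {a | ∀ b, G.Adj a b → b = u}

section Leaves

variable [Fintype V] [DecidableEq V] [DecidableRel G.Adj]

lemma mem_leavesAt {a : V} : a ∈ G.leavesAt u ↔ ∀ b, G.Adj a b → b = u := by
  simp [leavesAt]

lemma adj_of_mem_leavesAt (hNI : NoIsolatedOn G univ) (hv : v ∈ G.leavesAt u) : G.Adj v u := by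
  obtain ⟨b, -, hvb⟩ := hNI v trivial
  exact mem_leavesAt.1 hv b hvb ▸ hvb

lemma existsUnique_adj_of_mem_leavesAt (hNI : NoIsolatedOn G univ) (hv : v ∈ G.leavesAt u) :
    ∃! w, G.Adj v w :=
  ⟨u, adj_of_mem_leavesAt hNI hv, mem_leavesAt.1 hv⟩

lemma pairwiseDisjoint_leavesAt (hNI : NoIsolatedOn G univ) :
    (univ : Set V).PairwiseDisjoint G.leavesAt := by
  intro u _ w _ huw
  refine Finset.disjoint_left.2 fun v hvu hvw => huw ?_
  exact mem_leavesAt.1 hvw u (adj_of_mem_leavesAt hNI hvu)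

end Leaves

namespace IsBipartition

lemma compl [Fintype V] [DecidableEq V] (hA : G.IsBipartition A) : G.IsBipartition Aᶜ :=
  fun _ _ hxy => by
    rw [Finset.mem_compl, Finset.mem_compl, not_not]
    exact (hA hxy).not.trans not_not

lemma maxIndepOn_univ (hNI : NoIsolatedOn G univ) (hA : G.IsBipartition A) :
    MaxIndepOn G univ A := by
  refine ⟨⟨subset_univ _, fun x hx y hy hxy => (hA hxy).1 hx hy⟩, fun b _ hb hind => ?_⟩
  obtain ⟨a, -, hba⟩ := hNI b trivial
  have ha : a ∈ A := not_not.1 (mt (hA hba).2 hb)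
  exact hind.2 (mem_insert b _) (mem_insert_of_mem _ ha) hba

lemma card_eq_indepNumOn (hNI : NoIsolatedOn G univ) (hWC : WellCoveredOn G univ)
    (hA : G.IsBipartition A) : A.card = indepNumOn G univ :=
  hWC A (hA.maxIndepOn_univ hNI)

variable [Fintype V] [DecidableEq V] [DecidableRel G.Adj]

lemma leavesAt_subset (hNI : NoIsolatedOn G univ) (hA : G.IsBipartition A) (hu : u ∉ A) :
    G.leavesAt u ⊆ A :=
  fun _ ha => (hA (adj_of_mem_leavesAt hNI ha)).2 hu

lemma maxIndepOn_erase_union_leavesAt (hNI : NoIsolatedOn G univ) (hA : G.IsBipartition A) :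
    MaxIndepOn G (univ \ {u}) (Aᶜ.erase u ∪ G.leavesAt u) := by
  set S := Aᶜ.erase u ∪ G.leavesAt u
  have hS : ∀ {x}, x ∈ S ↔ (x ≠ u ∧ x ∉ A) ∨ x ∈ G.leavesAt u := by
    simp [S]
  have hne : ∀ x ∈ S, x ≠ u := fun x hx =>
    (hS.1 hx).elim And.left fun h => (adj_of_mem_leavesAt hNI h).ne
  refine ⟨⟨fun x hx => ⟨trivial, hne x hx⟩, fun x hx y hy hxy => ?_⟩, fun v hv hvS hind => ?_⟩
  · rcases hS.1 hx with ⟨-, hxA⟩ | hxu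
    · rcases hS.1 hy with ⟨-, hyA⟩ | hyu
      · exact hxA ((hA hxy).2 hyA)
      · exact hne x hx (mem_leavesAt.1 hyu x hxy.symm)
    · exact hne y hy (mem_leavesAt.1 hxu y hxy)
  · have hvu : v ≠ u := hv.2
    obtain ⟨b, hvb, hbu⟩ : ∃ b, G.Adj v b ∧ b ≠ u := by
      by_contra! h
      exact hvS (hS.2 (Or.inr (mem_leavesAt.2 h)))
    have hvA : v ∈ A := by
      by_contra hvA
      exact hvS (hS.2 (Or.inl ⟨hvu, hvA⟩))
    have hbS : b ∈ S := hS.2 (Or.inl ⟨hbu, (hA hvb).1 hvA⟩)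
    exact hind.2 (mem_insert v _) (mem_insert_of_mem v hbS) hvb

lemma card_leavesAt (h2 : W2 G) (hA : G.IsBipartition A) (hu : u ∉ A) :
    (G.leavesAt u).card = 1 := by
  obtain ⟨hNI, hWC, hdel⟩ := h2
  have hdisj : Disjoint (Aᶜ.erase u) (G.leavesAt u) :=
    Finset.disjoint_of_subset_right (hA.leavesAt_subset hNI hu)
      (Finset.disjoint_of_subset_left (Finset.erase_subset u _) disjoint_compl_left)
  have hpos : 0 < Aᶜ.card := Finset.card_pos.2 ⟨u, Finset.mem_compl.2 hu⟩
  have hcard := (hdel u trivial).1 _ (hA.maxIndepOn_erase_union_leavesAt hNI)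
  rw [(hdel u trivial).2, ← hA.compl.card_eq_indepNumOn hNI hWC,
    Finset.card_union_of_disjoint hdisj, Finset.card_erase_of_mem (Finset.mem_compl.2 hu)] at hcard
  omega

lemma biUnion_leavesAt (h2 : W2 G) (hA : G.IsBipartition A) : Aᶜ.biUnion G.leavesAt = A := by
  have ⟨hNI, hWC, _⟩ := h2
  refine Finset.eq_of_subset_of_card_le
    (Finset.biUnion_subset.2 fun u hu => hA.leavesAt_subset hNI (Finset.mem_compl.1 hu))
    (le_of_eq ?_)
  calc A.card = Aᶜ.card := by
        rw [hA.card_eq_indepNumOn hNI hWC, hA.compl.card_eq_indepNumOn hNI hWC]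
    _ = ∑ u ∈ Aᶜ, (G.leavesAt u).card := by
        rw [Finset.sum_congr rfl fun u hu => hA.card_leavesAt h2 (Finset.mem_compl.1 hu),
          Finset.card_eq_sum_ones]
    _ = (Aᶜ.biUnion G.leavesAt).card :=
        (Finset.card_biUnion ((pairwiseDisjoint_leavesAt hNI).subset (subset_univ _))).symm

lemma existsUnique_adj (h2 : W2 G) (hA : G.IsBipartition A) (hv : v ∈ A) : ∃! w, G.Adj v w := by
  obtain ⟨u, -, hvu⟩ := Finset.mem_biUnion.1 ((hA.biUnion_leavesAt h2).symm ▸ hv)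
  exact existsUnique_adj_of_mem_leavesAt h2.1 hvu

end IsBipartition

end SimpleGraph

/-- A bipartite graph in `W₂` is a disjoint union of edges: every vertex has a
unique neighbor. -/
theorem stmt_2 [Fintype V] (G : SimpleGraph V) (h2 : W2 G)
    (hbip : ∃ A : Set V, ∀ x y : V, G.Adj x y → (x ∈ A ↔ y ∉ A)) :
    ∀ v : V, ∃! u : V, G.Adj v u := by
  classical
  obtain ⟨A, hA⟩ := hbip
  have hA' : G.IsBipartition A.toFinset := fun x y hxy => by simpa using hA x y hxy
  intro v
  by_cases hv : v ∈ A
  · exact hA'.existsUnique_adj h2 (Set.mem_toFinset.2 hv)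
  · exact hA'.compl.existsUnique_adj h2 (by simpa using hv)
end

section
/- Let G be a locally triangle-free graph in W₂ with α(G) = 2 and n vertices. Then every vertex of G has degree n − 3. -/
open Set

variable {V : Type*}

/-
The non-neighbours of a vertex `v` are exactly the vertices of `G_v`. When `α(G) = 2`, any
two of them are adjacent, since together with `v` they would otherwise be an independent
triple; as `G_v` is triangle-free, there are at most two of them. Conversely, well-coveredness
forbids `{v}` from being a maximal independent set, both in `G` and in
`G - u` for the first non-neighbour `u` found, which yields two distinct non-neighbours.
-/

section

variable {G : SimpleGraph V} {W : Set V}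

-- `indepNumOn` is an `sSup` in `ℕ`, which is `0` on an unbounded set.
lemma IsIndepOn.card_le_indepNumOn {S : Finset V} (hS : IsIndepOn G W ↑S)
    (hW : indepNumOn G W ≠ 0) : S.card ≤ indepNumOn G W := by
  have hbdd : BddAbove {n | ∃ S : Finset V, IsIndepOn G W ↑S ∧ S.card = n} := by
    by_contra hunbdd
    exact hW (csSup_of_not_bddAbove hunbdd |>.trans csSup_empty)
  exact le_csSup hbdd ⟨S, hS, rfl⟩

lemma isIndepOn_singleton {v : V} (hv : v ∈ W) : IsIndepOn G W ↑({v} : Finset V) := by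
  refine ⟨by simpa using hv, ?_⟩
  simp only [Finset.coe_singleton, mem_singleton_iff]
  rintro _ rfl _ rfl
  exact G.loopless.irrefl _

lemma WellCoveredOn.exists_not_adj (hW : WellCoveredOn G W) (hα : indepNumOn G W ≠ 1)
    {v : V} (hv : v ∈ W) : ∃ u ∈ W, u ≠ v ∧ ¬ G.Adj v u := by
  have hnotMax : ¬ MaxIndepOn G W {v} := fun hmax => hα (by simpa using (hW _ hmax).symm)
  simp only [MaxIndepOn, isIndepOn_singleton hv, true_and, not_forall, not_not] at hnotMax
  obtain ⟨u, hu, hne, huv⟩ := hnotMax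
  exact ⟨u, hu, by simpa using hne, huv.2 (by simp) (by simp)⟩

lemma mem_GDel_singleton {v x : V} : x ∈ GDel G {v} ↔ x ≠ v ∧ ¬ G.Adj v x := by
  simp [GDel, nbhd]

lemma GDel_singleton_eq_compl (v : V) : GDel G {v} = (insert v (G.neighborSet v))ᶜ := by
  ext x
  simp [mem_GDel_singleton, eq_comm]

lemma ncard_neighborSet_add_ncard_GDel_singleton [Finite V] (v : V) :
    (G.neighborSet v).ncard + (GDel G {v}).ncard + 1 = Nat.card V := by
  rw [GDel_singleton_eq_compl, ← ncard_add_ncard_compl (insert v (G.neighborSet v)),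
    ncard_insert_of_notMem G.notMem_neighborSet_self]
  omega

lemma isIndepOn_univ_triple [DecidableEq V] {a b c : V} (hab : ¬ G.Adj a b) (hac : ¬ G.Adj a c)
    (hbc : ¬ G.Adj b c) : IsIndepOn G univ ↑({a, b, c} : Finset V) := by
  refine ⟨subset_univ _, ?_⟩
  simp only [Finset.coe_insert, Finset.coe_singleton, mem_insert_iff, mem_singleton_iff]
  rintro x (rfl | rfl | rfl) y (rfl | rfl | rfl) <;> simp_all [G.adj_comm]

lemma pairwise_adj_GDel_singleton (hα : indepNum G = 2) (v : V) :
    (GDel G {v}).Pairwise G.Adj := by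
  classical
  intro x hx y hy hxy
  rw [mem_GDel_singleton] at hx hy
  by_contra hnxy
  have hcard : ({v, x, y} : Finset V).card = 3 :=
    Finset.card_eq_three.mpr ⟨v, x, y, hx.1.symm, hy.1.symm, hxy, rfl⟩
  have hα' : indepNumOn G univ = 2 := hα
  have := (isIndepOn_univ_triple hx.2 hy.2 hnxy).card_le_indepNumOn (by omega)
  omega

lemma TriangleFreeOn.ncard_le_two_of_pairwise_adj (hT : TriangleFreeOn G W)
    (hW : W.Pairwise G.Adj) : W.ncard ≤ 2 := by
  by_contra! hlt
  obtain ⟨x, y, z, hx, hy, hz, hxy, hxz, hyz⟩ :=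
    (two_lt_ncard_iff (finite_of_ncard_pos (by omega))).mp hlt
  exact hT x hx y hy z hz ⟨hW hx hy hxy, hW hy hz hyz, hW hx hz hxz⟩

lemma W2.two_le_ncard_GDel_singleton [Finite V] (h2 : W2 G) (hα : indepNum G = 2) (v : V) :
    2 ≤ (GDel G {v}).ncard := by
  obtain ⟨-, hwc, hdel⟩ := h2
  have hα' : indepNumOn G univ = 2 := hα
  obtain ⟨u₁, -, hu₁v, hvu₁⟩ := hwc.exists_not_adj (by omega) (mem_univ v)
  obtain ⟨hwc', hα''⟩ : WellCoveredOn G (univ \ {u₁}) ∧ _ := hdel u₁ (mem_univ u₁)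
  obtain ⟨u₂, hu₂, hu₂v, hvu₂⟩ :=
    hwc'.exists_not_adj (by omega) (show v ∈ univ \ {u₁} by simpa using hu₁v.symm)
  have hu₁₂ : u₁ ≠ u₂ := fun h => hu₂.2 h.symm
  exact (one_lt_ncard_iff).mpr
    ⟨u₁, u₂, mem_GDel_singleton.mpr ⟨hu₁v, hvu₁⟩, mem_GDel_singleton.mpr ⟨hu₂v, hvu₂⟩, hu₁₂⟩

end

/-- In a locally triangle-free graph in `W₂` with `α(G) = 2` and `n` vertices,
every vertex has degree `n - 3`. -/
theorem stmt_5 [Fintype V] (G : SimpleGraph V) (h2 : W2 G)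
    (hloc : LocallyTriangleFree G) (hα : indepNum G = 2) :
    ∀ v : V, (G.neighborSet v).ncard = Fintype.card V - 3 := by
  intro v
  have hcard := ncard_neighborSet_add_ncard_GDel_singleton (G := G) v
  have hGv : (GDel G {v}).ncard = 2 :=
    le_antisymm ((hloc v).ncard_le_two_of_pairwise_adj (pairwise_adj_GDel_singleton hα v))
      (h2.two_le_ncard_GDel_singleton hα v)
  rw [Nat.card_eq_fintype_card] at hcard
  omega
end

section
/- Let G be a triangle-free graph in W₂ whose vertex set is partitioned as V(G) = S ∪ T ∪ U with |S| + |T| ≥ 2 and such that every vertex in U is adjacent to all vertices in S ∪ T. Then U is empty. -/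
/-! If some `v ∈ U` existed, triangle-freeness would make both `S ∪ T` and `U` independent
(their vertices have the common neighbour `v`, resp. any vertex of `S ∪ T`), so `G` would be the
complete bipartite graph between them. Both sides of a complete bipartite graph are maximal
independent, so well-coveredness of `G` gives `|U| = |S ∪ T| ≥ 2`, and well-coveredness of
`G - v`, again complete bipartite, gives `|U| - 1 = |S ∪ T|`. -/

open Set

variable {V : Type*}

section CompleteBipartite

variable {G : SimpleGraph V} {W : Set V}

theorem maxIndepOn_of_dominating {S : Finset V} (hS : IsIndepOn G W S)
    (hdom : ∀ w ∈ W, w ∉ S → ∃ s ∈ S, G.Adj w s) : MaxIndepOn G W S := by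
  refine ⟨hS, fun w hw hwS hind => ?_⟩
  obtain ⟨s, hs, hws⟩ := hdom w hw hwS
  exact hind.2 (mem_insert w _) (mem_insert_of_mem w hs) hws

theorem card_eq_of_wellCoveredOn_of_completeBipartite {A B : Finset V}
    (hwc : WellCoveredOn G W) (hcover : ∀ w ∈ W, w ∈ A ∨ w ∈ B)
    (hA : IsIndepOn G W A) (hB : IsIndepOn G W B) (hadj : ∀ a ∈ A, ∀ b ∈ B, G.Adj a b)
    (hAne : A.Nonempty) (hBne : B.Nonempty) : A.card = B.card := by
  have hAmax : MaxIndepOn G W A := maxIndepOn_of_dominating hA fun w hw hwA => by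
    obtain ⟨a, ha⟩ := hAne
    exact ⟨a, ha, (hadj a ha w ((hcover w hw).resolve_left hwA)).symm⟩
  have hBmax : MaxIndepOn G W B := maxIndepOn_of_dominating hB fun w hw hwB => by
    obtain ⟨b, hb⟩ := hBne
    exact ⟨b, hb, hadj w ((hcover w hw).resolve_right hwB) b hb⟩
  rw [hwc A hAmax, hwc B hBmax]

theorem not_w2On_of_completeBipartite {A B : Finset V} (hW : ↑A ∪ ↑B = W)
    (hA : ∀ x ∈ A, ∀ y ∈ A, ¬ G.Adj x y) (hB : ∀ x ∈ B, ∀ y ∈ B, ¬ G.Adj x y)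
    (hadj : ∀ a ∈ A, ∀ b ∈ B, G.Adj a b) (hAcard : 2 ≤ A.card) (hBne : B.Nonempty) :
    ¬ W2On G W := by
  classical
  rintro ⟨-, hwc, hdel⟩
  obtain ⟨v, hvB⟩ := hBne
  have hAne : A.Nonempty := Finset.card_pos.mp (by omega)
  have hAW : ↑A ⊆ W := hW ▸ subset_union_left
  have hBW : ↑B ⊆ W := hW ▸ subset_union_right
  have hcover : ∀ w ∈ W, w ∈ A ∨ w ∈ B := fun w hw => by rwa [← hW] at hw
  have hvA : v ∉ A := fun hvA => G.irrefl (hadj v hvA v hvB)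
  have hcard : A.card = B.card :=
    card_eq_of_wellCoveredOn_of_completeBipartite hwc hcover
      ⟨hAW, hA⟩ ⟨hBW, hB⟩ hadj hAne ⟨v, hvB⟩
  have hcard' : A.card = (B.erase v).card := by
    refine card_eq_of_wellCoveredOn_of_completeBipartite (hdel v (hBW hvB)).1
      (fun w hw => (hcover w hw.1).imp_right fun hwB => Finset.mem_erase.mpr ⟨hw.2, hwB⟩)
      ⟨fun x hx => ⟨hAW hx, fun hxv => hvA (hxv ▸ hx)⟩, hA⟩
      ⟨fun x hx => ⟨hBW (Finset.mem_of_mem_erase hx), (Finset.mem_erase.mp hx).1⟩,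
        fun x hx y hy => hB x (Finset.mem_of_mem_erase hx) y (Finset.mem_of_mem_erase hy)⟩
      (fun x hx y hy => hadj x hx y (Finset.mem_of_mem_erase hy)) hAne
      (Finset.card_pos.mp ?_)
    rw [Finset.card_erase_of_mem hvB]
    omega
  rw [Finset.card_erase_of_mem hvB] at hcard'
  omega

end CompleteBipartite

theorem stmt_7_general [Fintype V] (G : SimpleGraph V) (h2 : W2 G)
    (htf : TriangleFreeOn G Set.univ)
    (S T U : Set V) (hST : Disjoint S T)
    (hcover : S ∪ T ∪ U = Set.univ) (hcard : 2 ≤ S.ncard + T.ncard)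
    (hadj : ∀ u ∈ U, ∀ w ∈ S ∪ T, G.Adj u w) :
    U = ∅ := by
  classical
  by_contra hU
  obtain ⟨v, hv⟩ := nonempty_iff_ne_empty.mpr hU
  set A := (S ∪ T).toFinset
  set B := U.toFinset
  have hABadj : ∀ a ∈ A, ∀ b ∈ B, G.Adj a b := fun a ha b hb =>
    (hadj b (mem_toFinset.mp hb) a (mem_toFinset.mp ha)).symm
  have hvB : v ∈ B := mem_toFinset.mpr hv
  have hAcard : 2 ≤ A.card := by
    rwa [← ncard_eq_toFinset_card', ncard_union_eq hST]
  obtain ⟨a, ha⟩ : A.Nonempty := Finset.card_pos.mp (by omega)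
  have hAind : ∀ x ∈ A, ∀ y ∈ A, ¬ G.Adj x y := fun x hx y hy hxy =>
    htf v trivial x trivial y trivial ⟨(hABadj x hx v hvB).symm, hxy, (hABadj y hy v hvB).symm⟩
  have hBind : ∀ x ∈ B, ∀ y ∈ B, ¬ G.Adj x y := fun x hx y hy hxy =>
    htf a trivial x trivial y trivial ⟨hABadj a ha x hx, hxy, hABadj a ha y hy⟩
  have hW : ↑A ∪ ↑B = (univ : Set V) := by simp only [A, B, coe_toFinset, hcover]
  exact not_w2On_of_completeBipartite hW hAind hBind hABadj hAcard ⟨v, hvB⟩ h2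

/-- In a triangle-free graph in `W₂`, if `V = S ∪ T ∪ U` is a partition with
`|S| + |T| ≥ 2` and every vertex of `U` is adjacent to all of `S ∪ T`, then
`U = ∅`. -/
theorem stmt_7 [Fintype V] (G : SimpleGraph V) (h2 : W2 G)
    (htf : TriangleFreeOn G Set.univ)
    (S T U : Set V) (hST : Disjoint S T) (hSU : Disjoint S U) (hTU : Disjoint T U)
    (hcover : S ∪ T ∪ U = Set.univ) (hcard : 2 ≤ S.ncard + T.ncard)
    (hadj : ∀ u ∈ U, ∀ w ∈ S ∪ T, G.Adj u w) :
    U = ∅ :=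
  stmt_7_general G h2 htf S T U hST hcover hcard hadj
end

section
/- Let G be a locally triangle-free graph in W₂ with α(G) ≥ 3 that is not a join of two proper subgraphs and that contains a triangle (abc). Then every vertex in N_G(a) ∩ N_G(b) is adjacent to every vertex of G_{ab} = G \ N_G[{a,b}]. -/
open Set

variable {V : Type*}

theorem mem_GDel_singleton_iff {G : SimpleGraph V} {v x : V} :
    x ∈ GDel G {v} ↔ x ≠ v ∧ ¬ G.Adj v x := by
  simp [GDel, nbhd]

theorem mem_GDel_pair_iff {G : SimpleGraph V} {a b x : V} :
    x ∈ GDel G {a, b} ↔ x ≠ a ∧ x ≠ b ∧ ¬ G.Adj a x ∧ ¬ G.Adj b x := by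
  simp [GDel, nbhd, and_assoc]

/-- Otherwise the triangle lies in `G_w`. -/
theorem LocallyTriangleFree.mem_nbhd_triangle {G : SimpleGraph V} (hloc : LocallyTriangleFree G)
    {x y z : V} (hxy : G.Adj x y) (hyz : G.Adj y z) (hxz : G.Adj x z) (w : V) :
    w ∈ nbhd G {x, y, z} := by
  by_contra hw
  simp only [nbhd, mem_ofPred_eq, mem_insert_iff, mem_singleton_iff, exists_eq_or_imp,
    exists_eq_left, not_or] at hw
  obtain ⟨⟨hwx, hwy, hwz⟩, hxw, hyw, hzw⟩ := hw
  exact hloc w x (mem_GDel_singleton_iff.2 ⟨Ne.symm hwx, fun h => hxw h.symm⟩)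
    y (mem_GDel_singleton_iff.2 ⟨Ne.symm hwy, fun h => hyw h.symm⟩)
    z (mem_GDel_singleton_iff.2 ⟨Ne.symm hwz, fun h => hzw h.symm⟩) ⟨hxy, hyz, hxz⟩

theorem stmt_14_general (G : SimpleGraph V)
    (hloc : LocallyTriangleFree G)
    {a b : V} (hab : G.Adj a b) :
    ∀ u ∈ G.neighborSet a ∩ G.neighborSet b, ∀ v ∈ GDel G {a, b}, G.Adj u v := by
  rintro u ⟨hau, hbu⟩ v hv
  obtain ⟨hva, hvb, hav, hbv⟩ := mem_GDel_pair_iff.1 hv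
  rcases hloc.mem_nbhd_triangle hab hbu hau v with hv | ⟨w, hw, hwv⟩
  · rcases hv with rfl | rfl | rfl
    exacts [(hva rfl).elim, (hvb rfl).elim, (hav hau).elim]
  · rcases hw with rfl | rfl | rfl
    exacts [absurd hwv hav, absurd hwv hbv, hwv]

/-- Every common neighbor of `a` and `b` is adjacent to all vertices of
`G_{ab}`. -/
theorem stmt_14 [Fintype V] (G : SimpleGraph V) (h2 : W2 G)
    (hloc : LocallyTriangleFree G) (hα : 3 ≤ indepNum G) (hjoin : ¬ IsJoin G)
    {a b c : V} (hab : G.Adj a b) (hbc : G.Adj b c) (hac : G.Adj a c) :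
    ∀ u ∈ G.neighborSet a ∩ G.neighborSet b, ∀ v ∈ GDel G {a, b}, G.Adj u v :=
  stmt_14_general G hloc hab
end

section
/- Let G be a triangle-free graph in W₂ with α(G) = 2. Then G is either two disjoint edges or a 5-cycle. -/
open Set

variable {V : Type*}

/-! Triangle-freeness makes every neighbourhood independent, and `α(G) = 2` makes every set of
non-neighbours of a vertex a clique of the triangle-free graph; so a vertex has at most two
neighbours and at most two non-neighbours, and `|V| ≤ 5`. Conversely it has a neighbour (no
isolated vertices) and two non-neighbours: a vertex `u` with at most one non-neighbour `w` would
make `{u}` a maximal independent set of `G` or of `G - w`, both well-covered with `α = 2`. Hence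
`G` is `1`-regular on four vertices or `2`-regular on five, and in the latter case two
non-adjacent vertices have two neighbours each among the three remaining vertices, hence a
common one. -/

namespace SimpleGraph

variable {G : SimpleGraph V}

lemma isIndepOn_univ_iff {S : Set V} : IsIndepOn G Set.univ S ↔ G.IsIndepSet S :=
  ⟨fun h _ hx _ hy _ => h.2 hx hy,
    fun h => ⟨Set.subset_univ S, fun _ hx _ hy hxy => h hx hy hxy.ne hxy⟩⟩

lemma indepNum_univ_eq_indepNum : _root_.indepNum G = G.indepNum := by
  simp only [_root_.indepNum, indepNumOn, SimpleGraph.indepNum, isIndepOn_univ_iff, isNIndepSet_iff]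

lemma indepSetFree_of_indepNum_lt [Finite V] {k : ℕ} (h : G.indepNum < k) :
    G.IndepSetFree k := fun _ hs =>
  (hs.isIndepSet.card_le_indepNum.trans_lt (hs.card_eq ▸ h)).false

lemma CliqueFree.degree_lt_of_indepSetFree [Fintype V] [DecidableRel G.Adj] {k : ℕ}
    (hG : G.CliqueFree 3) (hk : G.IndepSetFree k) (v : V) : G.degree v < k := by
  by_contra! hle
  obtain ⟨t, hts, ht⟩ := Finset.exists_subset_card_eq hle
  refine hk t ⟨(G.isIndepSet_neighborSet_of_triangleFree hG v).mono ?_, ht⟩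
  simpa [← coe_neighborFinset] using hts

variable (G) in
lemma degree_add_degree_compl [Fintype V] [DecidableEq V] [DecidableRel G.Adj] (v : V) :
    G.degree v + Gᶜ.degree v + 1 = Fintype.card V := by
  have := G.degree_lt_card_verts v
  rw [degree_compl]
  omega

lemma reachable_of_card_le_degree_add_degree [Fintype V] [DecidableRel G.Adj] {u v : V}
    (h : Fintype.card V ≤ G.degree u + G.degree v + 1) : G.Reachable u v := by
  classical
  by_cases huv : u = v
  · exact huv ▸ Reachable.refl u
  by_cases hadj : G.Adj u v
  · exact hadj.reachable
  have hsub : ∀ x, ¬ G.Adj x v → ¬ G.Adj x u → G.neighborFinset x ⊆ {u, v}ᶜ := by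
    intro x hxv hxu w hw
    simp only [Finset.mem_compl, Finset.mem_insert, Finset.mem_singleton]
    rintro (rfl | rfl)
    · exact hxu ((mem_neighborFinset _ _ _).1 hw)
    · exact hxv ((mem_neighborFinset _ _ _).1 hw)
  have := Fintype.one_lt_card_iff.2 ⟨u, v, huv⟩
  obtain ⟨w, hw⟩ := Finset.inter_nonempty_of_card_lt_card_add_card
    (hsub u hadj (G.loopless.irrefl u)) (hsub v (G.loopless.irrefl v) (hadj ·.symm))
    (by rw [Finset.card_compl, Finset.card_pair huv, card_neighborFinset_eq_degree,
      card_neighborFinset_eq_degree]; omega)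
  rw [Finset.mem_inter, mem_neighborFinset, mem_neighborFinset] at hw
  exact hw.1.reachable.trans hw.2.reachable.symm

end SimpleGraph

variable {G : SimpleGraph V}

lemma TriangleFreeOn.cliqueFree_three (h : TriangleFreeOn G Set.univ) :
    G.CliqueFree 3 := by
  classical
  intro s hs
  obtain ⟨a, b, c, hab, hac, hbc, -⟩ := SimpleGraph.is3Clique_iff.1 hs
  exact h a trivial b trivial c trivial ⟨hab, hbc, hac⟩

lemma NoIsolatedOn.degree_pos [Fintype V] [DecidableRel G.Adj] (h : NoIsolatedOn G Set.univ)
    (v : V) : 0 < G.degree v := by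
  obtain ⟨u, -, hu⟩ := h v trivial
  exact G.degree_pos_iff_exists_adj v |>.2 ⟨u, hu⟩

/-- Otherwise `{u}` would be a maximal independent set of size one. -/
lemma WellCoveredOn.exists_ne_not_adj {W : Set V} (hW : WellCoveredOn G W)
    (hα : indepNumOn G W ≠ 1) {u : V} (hu : u ∈ W) : ∃ w ∈ W, w ≠ u ∧ ¬ G.Adj u w := by
  by_contra! h
  refine hα (hW {u} ⟨⟨by simpa using hu, by simp⟩, fun w hw hwu hind => ?_⟩).symm
  have hwu : w ≠ u := by simpa using hwu
  exact hind.2 (by simp) (by simp) (h w hw hwu).symm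

lemma W2.two_le_degree_compl [Fintype V] [DecidableEq V] [DecidableRel G.Adj] (h : W2 G)
    (hα : indepNum G ≠ 1) (u : V) : 2 ≤ Gᶜ.degree u := by
  obtain ⟨-, hwc, hdel⟩ := h
  obtain ⟨w, -, hwu, huw⟩ := hwc.exists_ne_not_adj hα (Set.mem_univ u)
  obtain ⟨hwc', hα'⟩ := hdel w trivial
  obtain ⟨w', hw', hw'u, huw'⟩ :=
    hwc'.exists_ne_not_adj (hα' ▸ hα) (show u ∈ Set.univ \ {w} by simpa using hwu.symm)
  refine Finset.one_lt_card.2 ⟨w, ?_, w', ?_, fun h => hw'.2 h.symm⟩ <;>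
    simp [SimpleGraph.compl_adj, *, Ne.symm]

/-- A triangle-free graph in `W₂` with `α(G) = 2` is either two disjoint edges
or a 5-cycle. -/
theorem stmt_19 [Fintype V] (G : SimpleGraph V) (h2 : W2 G)
    (htf : TriangleFreeOn G Set.univ) (hα : indepNum G = 2) :
    (Fintype.card V = 4 ∧ ∀ v : V, ∃! u : V, G.Adj v u) ∨
    (Fintype.card V = 5 ∧ G.Connected ∧ ∀ v : V, (G.neighborSet v).ncard = 2) := by
  classical
  have hG := htf.cliqueFree_three
  rw [G.indepNum_univ_eq_indepNum] at hα
  have hG' : G.IndepSetFree 3 := SimpleGraph.indepSetFree_of_indepNum_lt (by omega)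
  have hdeg (v : V) : 0 < G.degree v ∧ G.degree v < 3 :=
    ⟨h2.1.degree_pos v, hG.degree_lt_of_indepSetFree hG' v⟩
  have hdegc (v : V) : 2 ≤ Gᶜ.degree v ∧ Gᶜ.degree v < 3 :=
    ⟨h2.two_le_degree_compl (by rw [G.indepNum_univ_eq_indepNum]; omega) v,
      (G.cliqueFree_compl.2 hG').degree_lt_of_indepSetFree (G.indepSetFree_compl.2 hG) v⟩
  obtain ⟨s, hs⟩ := G.exists_isNIndepSet_indepNum
  obtain ⟨v₀, -⟩ := Finset.card_pos.1 (by rw [hs.card_eq]; omega : 0 < s.card)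
  have hsum (v : V) := G.degree_add_degree_compl v
  have hcard : Fintype.card V = 4 ∨ Fintype.card V = 5 := by
    have := hsum v₀; have := hdeg v₀; have := hdegc v₀; omega
  rcases hcard with h4 | h5
  · refine .inl ⟨h4, fun v => SimpleGraph.degree_eq_one_iff_existsUnique_adj.1 ?_⟩
    have := hsum v; have := hdegc v; omega
  · have hdeg2 (v : V) : G.degree v = 2 := by
      have := hsum v; have := hdeg v; have := hdegc v; omega
    have : Nonempty V := ⟨v₀⟩
    refine .inr ⟨h5, ⟨fun u v => SimpleGraph.reachable_of_card_le_degree_add_degree ?_⟩,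
      fun v => ?_⟩
    · rw [hdeg2, hdeg2, h5]
    · rw [← Nat.card_coe_set_eq, Nat.card_eq_fintype_card, G.card_neighborSet_eq_degree, hdeg2]
end
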